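/- arXiv:2509.22124 — 4 statements merged into one kernel-verified Lean document; each statement's English description precedes it below -/
import Mathlib

section
/- Let μ₁,…,μ_d > 0, λ > 0, and n > 0. Define f(δ) = (1+δ)/n · Σᵢ μᵢ/(μᵢ + λ(1+δ)) for δ ≥ 0. Then f has a unique fixed point δ ≥ 0. -/
/-!
Writing `df(κ) = ∑ᵢ μᵢ / (μᵢ + κ)`, the equation `δ = (1 + δ)/n · df(λ(1 + δ))` is equivalent,
for `δ ≥ 0`, to `δ / (1 + δ) = df(λ(1 + δ)) / n`. The left side is strictly increasing and the
right side is antitone in `δ`; at `δ = 0` the right side is the larger one, while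
`df(κ) ≤ ∑ᵢ μᵢ / κ` makes it the smaller one at `δ = ∑ᵢ μᵢ / (nλ)`. The intermediate value
theorem gives a solution, and strict monotonicity of the difference gives uniqueness.
-/

open Finset Set

theorem existsUnique_eq_of_strictMonoOn_of_antitoneOn {f g : ℝ → ℝ} {a b : ℝ} (hab : a ≤ b)
    (hf : ContinuousOn f (Ici a)) (hg : ContinuousOn g (Ici a))
    (hf_mono : StrictMonoOn f (Ici a)) (hg_anti : AntitoneOn g (Ici a))
    (ha : f a ≤ g a) (hb : g b ≤ f b) :
    ∃! x, a ≤ x ∧ f x = g x := by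
  have hmono : StrictMonoOn (f - g) (Ici a) := fun x hx y hy hxy => by
    simp only [Pi.sub_apply]
    linarith [hf_mono hx hy hxy, hg_anti hx hy hxy.le]
  have hcont : ContinuousOn (f - g) (Icc a b) := (hf.sub hg).mono Icc_subset_Ici_self
  obtain ⟨x, ⟨hax, -⟩, hx⟩ :=
    intermediate_value_Icc hab hcont ⟨sub_nonpos.mpr ha, sub_nonneg.mpr hb⟩
  refine ⟨x, ⟨hax, sub_eq_zero.mp hx⟩, fun y ⟨hay, hy⟩ => ?_⟩
  exact hmono.injOn hay hax ((sub_eq_zero.mpr hy).trans hx.symm)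

theorem strictMonoOn_div_one_add : StrictMonoOn (fun x : ℝ => x / (1 + x)) (Ici 0) := by
  intro x (hx : 0 ≤ x) y (hy : 0 ≤ y) hxy
  rw [div_lt_div_iff₀ (by positivity) (by positivity)]
  linarith

theorem existsUnique_one_add_mul_eq_self {T : ℝ → ℝ} (hcont : ContinuousOn T (Ici 0))
    (hanti : AntitoneOn T (Ici 0)) (h0 : 0 ≤ T 0) {C : ℝ} (hC : 0 ≤ C)
    (hTC : (1 + C) * T C ≤ C) :
    ∃! δ, 0 ≤ δ ∧ (1 + δ) * T δ = δ := by
  have hiff : ∀ δ : ℝ, 0 ≤ δ → ((1 + δ) * T δ = δ ↔ δ / (1 + δ) = T δ) := fun δ hδ => by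
    rw [div_eq_iff (by positivity), eq_comm, mul_comm]
  have hTC' : T C ≤ C / (1 + C) := by rwa [le_div_iff₀ (by positivity), mul_comm]
  obtain ⟨δ, ⟨hδ, heq⟩, huniq⟩ := existsUnique_eq_of_strictMonoOn_of_antitoneOn hC
    (by fun_prop (disch := intro x (hx : 0 ≤ x); positivity)) hcont strictMonoOn_div_one_add
    hanti (by simpa using h0) hTC'
  exact ⟨δ, ⟨hδ, (hiff δ hδ).mpr heq⟩, fun y ⟨hy, hyeq⟩ => huniq y ⟨hy, (hiff y hy).mp hyeq⟩⟩

section DegreesOfFreedom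

variable {ι : Type*} [Fintype ι] {μ : ι → ℝ}

noncomputable def degreesOfFreedom (μ : ι → ℝ) (κ : ℝ) : ℝ := ∑ i, μ i / (μ i + κ)

theorem degreesOfFreedom_nonneg (hμ : ∀ i, 0 ≤ μ i) {κ : ℝ} (hκ : 0 ≤ κ) :
    0 ≤ degreesOfFreedom μ κ :=
  sum_nonneg fun i _ => div_nonneg (hμ i) (add_nonneg (hμ i) hκ)

theorem degreesOfFreedom_le (hμ : ∀ i, 0 ≤ μ i) {κ : ℝ} (hκ : 0 < κ) :
    degreesOfFreedom μ κ ≤ (∑ i, μ i) / κ := by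
  rw [degreesOfFreedom, sum_div]
  gcongr with i
  · exact hμ i
  · linarith [hμ i]

theorem antitoneOn_degreesOfFreedom (hμ : ∀ i, 0 ≤ μ i) :
    AntitoneOn (degreesOfFreedom μ) (Ioi 0) := by
  intro κ (hκ : 0 < κ) κ' _ hle
  unfold degreesOfFreedom
  gcongr with i
  · exact hμ i
  · linarith [hμ i]

theorem continuousOn_degreesOfFreedom (hμ : ∀ i, 0 ≤ μ i) :
    ContinuousOn (degreesOfFreedom μ) (Ioi 0) := by
  unfold degreesOfFreedom
  refine continuousOn_finsetSum _ fun i _ => ?_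
  exact continuousOn_const.div (continuousOn_const.add continuousOn_id)
    fun κ (hκ : 0 < κ) => by linarith [hμ i]

end DegreesOfFreedom

theorem stmt3_general (d : ℕ) (μ : Fin d → ℝ) (hμ : ∀ i, 0 < μ i)
    (lam : ℝ) (hlam : 0 < lam) (n : ℝ) (hn : 0 < n) :
    ∃! δ : ℝ, 0 ≤ δ ∧
      (1 + δ) / n * ∑ i, μ i / (μ i + lam * (1 + δ)) = δ := by
  have hμ₀ : ∀ i, 0 ≤ μ i := fun i => (hμ i).le
  have hκ : MapsTo (fun δ : ℝ => lam * (1 + δ)) (Ici 0) (Ioi 0) :=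
    fun δ (hδ : 0 ≤ δ) => show 0 < lam * (1 + δ) by positivity
  set C := (∑ i, μ i) / (n * lam)
  have hC : 0 ≤ C := div_nonneg (sum_nonneg fun i _ => hμ₀ i) (by positivity)
  have hdfC : (1 + C) * (degreesOfFreedom μ (lam * (1 + C)) / n) ≤ C := calc
    _ ≤ (1 + C) * ((∑ i, μ i) / (lam * (1 + C)) / n) := by
      gcongr; exact degreesOfFreedom_le hμ₀ (hκ hC)
    _ = C := by field_simp; simp only [C]; field_simp
  convert existsUnique_one_add_mul_eq_self
    (((continuousOn_degreesOfFreedom hμ₀).comp (by fun_prop) hκ).div_const n)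
    (fun x hx y hy hxy => div_le_div_of_nonneg_right
      (antitoneOn_degreesOfFreedom hμ₀ (hκ hx) (hκ hy) (by dsimp only; gcongr)) hn.le)
    (div_nonneg (degreesOfFreedom_nonneg hμ₀ (by positivity)) hn.le) hC hdfC using 3
  rw [div_mul_eq_mul_div, mul_div_assoc]
  rfl

/-- The fixed-point equation δ = (1+δ)/n · Σᵢ μᵢ/(μᵢ + λ(1+δ)) has a unique
nonnegative solution. -/
theorem stmt3 (d : ℕ) (hd : 0 < d) (μ : Fin d → ℝ) (hμ : ∀ i, 0 < μ i)
    (lam : ℝ) (hlam : 0 < lam) (n : ℝ) (hn : 0 < n) :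
    ∃! δ : ℝ, 0 ≤ δ ∧
      (1 + δ) / n * ∑ i, μ i / (μ i + lam * (1 + δ)) = δ :=
  stmt3_general d μ hμ lam hlam n hn
end

section
/- Fix 0 < c < 1, σ² ≥ 0, S ≥ 0, q > 0. With δ(λ), κ, α as in the Marčenko–Pastur closed form, the asymptotic training risk R_train(λ) = ((1+δ)/q)(λ²S/(1+κ) − λ³(1+δ)S/((1−α)(1+κ)²)) + σ²(1 − c/(1+κ) − λc(1+δ)/((1−α)(1+κ)²)) satisfies R_train(λ) → σ²(1−c) as λ → 0⁺. -/
open Filter Topology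

noncomputable def deltaMP (c l : ℝ) : ℝ :=
  (-(1 + l - c) + Real.sqrt ((1 + l - c) ^ 2 + 4 * l * c)) / (2 * l)

noncomputable def kappaMP (c l : ℝ) : ℝ := l * (1 + deltaMP c l)

noncomputable def alphaMP (c l : ℝ) : ℝ := c / (1 + kappaMP c l) ^ 2

noncomputable def Rtrain (c σ2 S q l : ℝ) : ℝ :=
  ((1 + deltaMP c l) / q) * (l ^ 2 * S / (1 + kappaMP c l)
      - l ^ 3 * (1 + deltaMP c l) * S / ((1 - alphaMP c l) * (1 + kappaMP c l) ^ 2))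
    + σ2 * (1 - c / (1 + kappaMP c l)
      - l * c * (1 + deltaMP c l) / ((1 - alphaMP c l) * (1 + kappaMP c l) ^ 2))

/-- For 0 < c < 1, the asymptotic training risk tends to σ²(1−c) as λ → 0⁺. -/
theorem stmt10 (c σ2 S q : ℝ) (hc0 : 0 < c) (hc1 : c < 1)
    (hσ : 0 ≤ σ2) (hS : 0 ≤ S) (hq : 0 < q) :
    Tendsto (fun l => Rtrain c σ2 S q l) (nhdsWithin 0 (Set.Ioi 0))
      (nhds (σ2 * (1 - c))) := by
  set s : ℝ → ℝ := fun l => Real.sqrt ((1 + l - c) ^ 2 + 4 * l * c) with hs_def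
  set g : ℝ → ℝ := fun l => 2 * c / (s l + (1 + l - c)) with hg_def
  set k : ℝ → ℝ := fun l => l * (1 + g l) with hk_def
  set a : ℝ → ℝ := fun l => c / (1 + k l) ^ 2 with ha_def
  set F : ℝ → ℝ := fun l =>
    ((1 + g l) / q) * (l ^ 2 * S / (1 + k l)
      - l ^ 3 * (1 + g l) * S / ((1 - a l) * (1 + k l) ^ 2))
    + σ2 * (1 - c / (1 + k l)
      - l * c * (1 + g l) / ((1 - a l) * (1 + k l) ^ 2)) with hF_def
  -- pointwise equality on Ioi 0
  have hdg : ∀ l ∈ Set.Ioi (0:ℝ), deltaMP c l = g l := by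
    intro l hl
    have hl : (0:ℝ) < l := hl
    have hnn : (0:ℝ) ≤ (1 + l - c) ^ 2 + 4 * l * c := by nlinarith
    have hsq : s l ^ 2 = (1 + l - c) ^ 2 + 4 * l * c := Real.sq_sqrt hnn
    have hsn : 0 ≤ s l := Real.sqrt_nonneg _
    have hden : 0 < s l + (1 + l - c) := by nlinarith
    simp only [deltaMP, hg_def]
    rw [div_eq_div_iff (by positivity) (by positivity)]
    nlinarith [hsq]
  have hRF : ∀ l ∈ Set.Ioi (0:ℝ), Rtrain c σ2 S q l = F l := by
    intro l hl
    simp only [Rtrain, kappaMP, alphaMP, hdg l hl, hF_def, hk_def, ha_def]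
  -- continuity of F at 0
  have hs0 : s 0 = 1 - c := by
    simp only [hs_def]
    norm_num
    exact Real.sqrt_sq (by linarith)
  have hsc : ContinuousAt s 0 := by fun_prop
  have hden0 : s 0 + (1 + 0 - c) ≠ 0 := by rw [hs0]; norm_num; linarith
  have hgc : ContinuousAt g 0 :=
    continuousAt_const.div (hsc.add (by fun_prop)) hden0
  have hg0 : g 0 = c / (1 - c) := by
    simp only [hg_def, hs0]
    rw [show (1:ℝ) - c + (1 + 0 - c) = 2 * (1 - c) by ring]
    rw [mul_div_mul_left _ _ (by norm_num : (2:ℝ) ≠ 0)]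
  have hkc : ContinuousAt k 0 := continuousAt_id.mul (continuousAt_const.add hgc)
  have hk0 : k 0 = 0 := by simp [hk_def]
  have hk1 : (1:ℝ) + k 0 ≠ 0 := by rw [hk0]; norm_num
  have hac : ContinuousAt a 0 :=
    continuousAt_const.div ((continuousAt_const.add hkc).pow 2) (by
      rw [hk0]; norm_num)
  have ha0 : a 0 = c := by simp [ha_def, hk0]
  have hden2 : (1 - a 0) * (1 + k 0) ^ 2 ≠ 0 := by
    rw [ha0, hk0]; norm_num; linarith
  have hFc : ContinuousAt F 0 := by
    apply ContinuousAt.add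
    · exact ((continuousAt_const.add hgc).div continuousAt_const hq.ne').mul
        ((((continuousAt_id.pow 2).mul continuousAt_const).div
            (continuousAt_const.add hkc) hk1).sub
          ((((continuousAt_id.pow 3).mul (continuousAt_const.add hgc)).mul
              continuousAt_const).div
            (((continuousAt_const.sub hac)).mul ((continuousAt_const.add hkc).pow 2))
            hden2))
    · exact continuousAt_const.mul
        ((continuousAt_const.sub
            (continuousAt_const.div (continuousAt_const.add hkc) hk1)).sub
          (((continuousAt_id.mul continuousAt_const).mul
              (continuousAt_const.add hgc)).div
            (((continuousAt_const.sub hac)).mul ((continuousAt_const.add hkc).pow 2))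
            hden2))
  have hF0 : F 0 = σ2 * (1 - c) := by
    simp only [hF_def, hk0, hg0, ha0]
    norm_num
  have hFt : Tendsto F (nhdsWithin 0 (Set.Ioi 0)) (nhds (σ2 * (1 - c))) := by
    rw [← hF0]
    exact hFc.continuousWithinAt.tendsto
  exact tendsto_nhdsWithin_congr (fun x hx => (hRF x hx).symm) hFt
end

section
/- Let c > 0, λ > 0, and δ the unique nonnegative solution of δ = c(1+δ)/(1+λ(1+δ)). Then δ is strictly decreasing in λ. -/
lemma deltaMP_key (c l : ℝ) (hc : 0 < c) (hl : 0 < l) :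
    0 < deltaMP c l ∧
      l * deltaMP c l * (1 + deltaMP c l) + deltaMP c l = c * (1 + deltaMP c l) := by
  set b := 1 + l - c with hb
  have hnn : (0:ℝ) ≤ b ^ 2 + 4 * l * c := by positivity
  have hs := Real.sq_sqrt hnn
  have hsnn := Real.sqrt_nonneg (b ^ 2 + 4 * l * c)
  set s := Real.sqrt (b ^ 2 + 4 * l * c) with hsdef
  have hgt : b < s := by nlinarith
  have hpos : 0 < deltaMP c l := by
    have : deltaMP c l = (-b + s) / (2 * l) := rfl
    rw [this]
    apply div_pos (by linarith) (by linarith)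
  refine ⟨hpos, ?_⟩
  have hm : deltaMP c l * (2 * l) = -b + s := by
    show (-b + s) / (2 * l) * (2 * l) = -b + s
    field_simp
  have hq4 : (4 * l) * (l * deltaMP c l ^ 2 + b * deltaMP c l - c) = (4 * l) * 0 := by
    linear_combination (deltaMP c l * (2 * l) + b + s) * hm + hs
  have hq : l * deltaMP c l ^ 2 + b * deltaMP c l - c = 0 :=
    mul_left_cancel₀ (by positivity) hq4
  linear_combination hq

/-- For fixed c > 0, the Marčenko–Pastur correction δ(λ) is strictly decreasing in λ > 0. -/
theorem stmt12 (c : ℝ) (hc : 0 < c) :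
    StrictAntiOn (fun l => deltaMP c l) (Set.Ioi (0 : ℝ)) := by
  intro l1 h1 l2 h2 hlt
  simp only [Set.mem_Ioi] at h1 h2
  obtain ⟨p1, e1⟩ := deltaMP_key c l1 hc h1
  obtain ⟨p2, e2⟩ := deltaMP_key c l2 hc h2
  by_contra h
  push_neg at h
  set d1 := deltaMP c l1
  set d2 := deltaMP c l2
  -- h : d1 ≤ d2
  nlinarith [mul_pos p1 p2, mul_le_mul_of_nonneg_left h (le_of_lt p1),
    mul_pos (mul_pos h1 p1) p2, mul_pos (mul_pos h2 p2) p1,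
    mul_lt_mul_of_pos_right hlt p1, mul_pos p2 (mul_pos p1 p1)]
end

section
/- Let c > 0 and λ > 0, and let δ = (−(1+λ−c)+√((1+λ−c)²+4λc))/(2λ), κ = λ(1+δ). Then κ is strictly increasing in λ and satisfies κ > 0. -/
lemma kappaMP_eq (c l : ℝ) (hl : 0 < l) :
    kappaMP c l = (l + c - 1 + Real.sqrt ((1 - l - c) ^ 2 + 4 * l)) / 2 := by
  have hE : (1 + l - c) ^ 2 + 4 * l * c = (1 - l - c) ^ 2 + 4 * l := by ring
  unfold kappaMP deltaMP
  rw [hE]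
  have hl' : l ≠ 0 := ne_of_gt hl
  field_simp
  ring

/-- For fixed c > 0, κ(λ) = λ(1+δ(λ)) is strictly increasing and positive on λ > 0. -/
theorem stmt13 (c : ℝ) (hc : 0 < c) :
    StrictMonoOn (fun l => kappaMP c l) (Set.Ioi (0 : ℝ)) ∧
    ∀ l : ℝ, 0 < l → 0 < kappaMP c l := by
  constructor
  · intro a ha b hb hab
    simp only [Set.mem_Ioi] at ha hb
    simp only []
    rw [kappaMP_eq c a ha, kappaMP_eq c b hb]
    have hargeq : ∀ l : ℝ, (1 - l - c) ^ 2 + 4 * l = (1 + l + c) ^ 2 - 4 * c := by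
      intro l; ring
    rw [hargeq a, hargeq b]
    have hsq : Real.sqrt ((1 + a + c) ^ 2 - 4 * c) ≤
        Real.sqrt ((1 + b + c) ^ 2 - 4 * c) := by
      apply Real.sqrt_le_sqrt
      nlinarith
    linarith
  · intro l hl
    rw [kappaMP_eq c l hl]
    have h1 : Real.sqrt ((1 - l - c) ^ 2) < Real.sqrt ((1 - l - c) ^ 2 + 4 * l) := by
      apply Real.sqrt_lt_sqrt (by positivity)
      linarith
    rw [Real.sqrt_sq_eq_abs] at h1
    have h2 : 1 - l - c ≤ |1 - l - c| := le_abs_self _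
    linarith
end
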